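/- arXiv:2605.11326 — 6 statements merged into one kernel-verified Lean document; each statement's English description precedes it below -/
import Mathlib

section
/- Let T be an ω-tree and let 𝒳 be an almost disjoint family of subtrees of T. Then the preorder Q_T(𝒳) is σ-centered, i.e., Q_T(𝒳) is the union of countably many centered subsets. -/
open Cardinal

/-- The height of a node in a tree: the number of its strict predecessors. -/
noncomputable def treeHt {T : Type*} [PartialOrder T] (t : T) : ℕ :=
  Nat.card {s : T | s < t}

/-- An ω-tree: a countable partial order with a least element, in which every node has a
finite linearly ordered set of strict predecessors, and every level is finite and nonempty. -/
def IsOmegaTree (T : Type*) [PartialOrder T] : Prop :=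
  Countable T ∧
  (∃ r : T, ∀ t : T, r ≤ t) ∧
  (∀ t : T, {s : T | s < t}.Finite) ∧
  (∀ t : T, IsChain (· ≤ ·) {s : T | s < t}) ∧
  (∀ n : ℕ, {t : T | treeHt t = n}.Finite ∧ {t : T | treeHt t = n}.Nonempty)

/-- `T^{↑<ω}`: finite sequences of nodes with strictly increasing heights. -/
def UpSeq {T : Type*} [PartialOrder T] (σ : List T) : Prop :=
  σ.Pairwise fun a b => treeHt a < treeHt b

/-- An almost disjoint family of (infinite) subtrees of `T`. -/
def IsADSubtreeFamily {T : Type*} [PartialOrder T] (𝒳 : Set (Set T)) : Prop :=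
  (∀ A ∈ 𝒳, A.Infinite ∧ IsLowerSet A) ∧
  ∀ A ∈ 𝒳, ∀ B ∈ 𝒳, A ≠ B → (A ∩ B).Finite

/-- The forcing `Q_T(𝒳)`: triples `(σ_p, h_p, 𝒳_p)` where `σ_p ∈ T^{↑<ω}`,
`h_p : T^{↑<ω} → ω`, `𝒳_p ∈ [𝒳]^{<ω}`, and `h_p(σ_p↾i) ≤ ht(σ_p(i))` for all `i < |σ_p|`. -/
def QSet {T : Type*} [PartialOrder T] (𝒳 : Set (Set T)) :
    Set (List T × (List T → ℕ) × Set (Set T)) :=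
  {p | UpSeq p.1 ∧ p.2.2 ⊆ 𝒳 ∧ p.2.2.Finite ∧
    ∀ i : Fin p.1.length, p.2.1 (p.1.take i.val) ≤ treeHt (p.1.get i)}

/-- The preorder of `Q_T(𝒳)`: `q ≤ p` iff `σ_p` is an initial segment of `σ_q`, `h_p ≤ h_q`
pointwise, `𝒳_p ⊆ 𝒳_q`, and `σ_q(i) ∉ ⋃𝒳_p` for `|σ_p| ≤ i < |σ_q|`. -/
def QLE {T : Type*} [PartialOrder T] (q p : List T × (List T → ℕ) × Set (Set T)) : Prop :=
  p.1 <+: q.1 ∧ (∀ τ : List T, p.2.1 τ ≤ q.2.1 τ) ∧ p.2.2 ⊆ q.2.2 ∧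
  ∀ i : Fin q.1.length, p.1.length ≤ i.val → q.1.get i ∉ ⋃₀ p.2.2

/-- `Q_T(𝒳)` is σ-centered: it is the union of countably many centered subsets,
where a subset is centered if every finite subfamily has a common lower bound in `Q_T(𝒳)`. -/
theorem stmt1 {T : Type*} [PartialOrder T] (hT : IsOmegaTree T)
    (𝒳 : Set (Set T)) (h𝒳 : IsADSubtreeFamily 𝒳) :
    ∃ C : ℕ → Set (List T × (List T → ℕ) × Set (Set T)),
      (∀ n : ℕ, C n ⊆ QSet 𝒳) ∧
      (⋃ n : ℕ, C n) = QSet 𝒳 ∧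
      ∀ n : ℕ, ∀ F : Set (List T × (List T → ℕ) × Set (Set T)),
        F ⊆ C n → F.Finite → ∃ r ∈ QSet 𝒳, ∀ p ∈ F, QLE r p := by
  have hTc : Countable T := hT.1
  have : Countable (List T) := inferInstance
  have : Nonempty (List T) := ⟨[]⟩
  obtain ⟨e, he⟩ := exists_surjective_nat (List T)
  refine ⟨fun n => {p ∈ QSet 𝒳 | p.1 = e n}, fun n => Set.sep_subset _ _, ?_, ?_⟩
  · ext p
    simp only [Set.mem_iUnion, Set.mem_sep_iff]
    constructor
    · rintro ⟨n, hp, _⟩; exact hp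
    · intro hp; obtain ⟨n, hn⟩ := he p.1; exact ⟨n, hp, hn.symm⟩
  · intro n F hFC hF
    rcases F.eq_empty_or_nonempty with rfl | ⟨p0, hp0⟩
    · refine ⟨([], fun _ => 0, ∅), ?_, by simp⟩
      refine ⟨List.Pairwise.nil, by simp, Set.finite_empty, ?_⟩
      intro i; exact absurd i.2 (by simp)
    · set r : List T × (List T → ℕ) × Set (Set T) :=
        (e n, fun τ => hF.toFinset.sup (fun p => p.2.1 τ), ⋃₀ ((fun p => p.2.2) '' F)) with hr
      have hstem : ∀ p ∈ F, p.1 = e n := fun p hp => (hFC hp).2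
      have hQ : ∀ p ∈ F, p ∈ QSet 𝒳 := fun p hp => (hFC hp).1
      refine ⟨r, ?_, ?_⟩
      · refine ⟨?_, ?_, ?_, ?_⟩
        · simpa [hr, ← hstem p0 hp0] using (hQ p0 hp0).1
        · intro A hA
          simp only [hr, Set.mem_sUnion, Set.mem_image] at hA
          obtain ⟨B, ⟨p, hpF, rfl⟩, hAB⟩ := hA
          exact (hQ p hpF).2.1 hAB
        · refine Set.Finite.sUnion (hF.image _) ?_
          rintro B ⟨p, hpF, rfl⟩
          exact (hQ p hpF).2.2.1
        · intro i
          apply Finset.sup_le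
          intro p hp
          rw [Set.Finite.mem_toFinset] at hp
          have := (hQ p hp).2.2.2
          have hlen : p.1 = e n := hstem p hp
          have := this ⟨i.val, by rw [hlen]; exact i.2⟩
          simpa [hlen] using this
      · intro p hp
        have hlen : p.1 = e n := hstem p hp
        refine ⟨by simp [hr, hlen], ?_, ?_, ?_⟩
        · intro τ
          exact Finset.le_sup (f := fun p => p.2.1 τ) (Set.Finite.mem_toFinset hF |>.2 hp)
        · intro A hA
          exact ⟨p.2.2, ⟨p, hp, rfl⟩, hA⟩
        · intro i hi
          exfalso
          have : (e n).length ≤ i.val := by rw [← hlen]; exact hi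
          exact absurd i.2 (not_lt.2 this)
end

section
/- Let T be an ω-tree and let 𝒳 be an almost disjoint family of subtrees of T such that the ideal I_T(𝒳) is proper. Then for every infinite B ⊆ T with B ∉ I_T(𝒳) and every m < ω, the set 𝒟_{B,m} = {p ∈ Q_T(𝒳) : there exists i < |σ_p| with σ_p(i) ∈ B and ht(σ_p(i)) ≥ m} is dense in Q_T(𝒳). -/
open Cardinal

/-- The ideal generated by `𝒳` on `T`: sets almost covered by finitely many members of `𝒳`. -/
def IdealGen {T : Type*} (𝒳 : Set (Set T)) : Set (Set T) :=
  {X | ∃ F, F ⊆ 𝒳 ∧ F.Finite ∧ (X \ ⋃₀ F).Finite}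

/-- If `I_T(𝒳)` is proper then, for every infinite `B ⊆ T` with `B ∉ I_T(𝒳)` and every
`m < ω`, the set `𝒟_{B,m}` of conditions whose stem contains a node of `B` of height `≥ m`
is dense in `Q_T(𝒳)`. -/
theorem stmt5 {T : Type*} [PartialOrder T] (hT : IsOmegaTree T)
    (𝒳 : Set (Set T)) (h𝒳 : IsADSubtreeFamily 𝒳)
    (hproper : Set.univ ∉ IdealGen 𝒳)
    (B : Set T) (hBinf : B.Infinite) (hB : B ∉ IdealGen 𝒳) (m : ℕ) :
    ∀ p ∈ QSet 𝒳, ∃ r ∈ QSet 𝒳, QLE r p ∧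
      ∃ i : Fin r.1.length, r.1.get i ∈ B ∧ m ≤ treeHt (r.1.get i) := by

  intro p hp
  obtain ⟨hup, hsub, hfin, hht⟩ := hp
  have hdiff : (B \ ⋃₀ p.2.2).Infinite := fun hfinB => hB ⟨p.2.2, hsub, hfin, hfinB⟩
  set M := m + p.2.1 p.1 + (p.1.map treeHt).sum + 1 with hM
  have hlow : {t : T | treeHt t < M}.Finite := by
    have hsubset : {t : T | treeHt t < M} ⊆ ⋃ n ∈ Finset.range M, {t : T | treeHt t = n} := by
      intro t ht
      simp only [Set.mem_iUnion, Finset.mem_range, Set.mem_setOf_eq]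
      exact ⟨treeHt t, ht, rfl⟩
    exact Set.Finite.subset
      (Set.Finite.biUnion (Finset.finite_toSet _) fun n _ => (hT.2.2.2.2 n).1) hsubset
  obtain ⟨t, ⟨htB, htF⟩, htM⟩ := ((hdiff.diff hlow).nonempty)
  have htM' : M ≤ treeHt t := not_lt.1 htM
  have hlt : ∀ a ∈ p.1, treeHt a < treeHt t := by
    intro a ha
    have h1 : treeHt a ≤ (p.1.map treeHt).sum :=
      List.single_le_sum (fun x _ => Nat.zero_le x) _ (List.mem_map_of_mem (f := treeHt) ha)
    omega
  refine ⟨(p.1 ++ [t], p.2.1, p.2.2), ⟨?_, hsub, hfin, ?_⟩, ⟨⟨[t], rfl⟩, fun τ => le_rfl,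
    fun A hA => hA, ?_⟩, ⟨⟨p.1.length, by simp⟩, ?_, ?_⟩⟩
  · rw [UpSeq, List.pairwise_append]
    refine ⟨hup, List.pairwise_singleton _ _, ?_⟩
    intro a ha b hb
    rw [List.mem_singleton] at hb
    subst hb
    exact hlt a ha
  · intro i
    have hi : i.val < p.1.length + 1 := by simpa using i.2
    rcases Nat.lt_or_ge i.val p.1.length with h | h
    · have htake : (p.1 ++ [t]).take i.val = p.1.take i.val :=
        List.take_append_of_le_length (le_of_lt h)
      have hget : (p.1 ++ [t]).get i = p.1.get ⟨i.val, h⟩ := by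
        simp [List.get_eq_getElem, List.getElem_append_left h]
      rw [htake, hget]
      exact hht ⟨i.val, h⟩
    · have heq : i.val = p.1.length := by omega
      have htake : (p.1 ++ [t]).take i.val = p.1 := by
        rw [heq]; simp
      have hget : (p.1 ++ [t]).get i = t := by
        simp [List.get_eq_getElem, heq]
      rw [htake, hget]
      show p.2.1 p.1 ≤ treeHt t
      omega
  · intro i hi
    have hi2 : i.val < p.1.length + 1 := by simpa using i.2
    have heq : i.val = p.1.length := by omega
    have hget : (p.1 ++ [t]).get i = t := by
      simp [List.get_eq_getElem, heq]
    rw [hget]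
    exact htF
  · have : ((p.1 ++ [t]).get ⟨p.1.length, by simp⟩) = t := by
      simp [List.get_eq_getElem]
    rw [this]; exact htB
  · have : ((p.1 ++ [t]).get ⟨p.1.length, by simp⟩) = t := by
      simp [List.get_eq_getElem]
    rw [this]; omega
end

section
/- Let T be an ω-tree, let 𝒳 be an almost disjoint family of subtrees of T, and let (q_β : β ∈ I) be an uncountable family of conditions in Q_T(𝒳), all with the same stem σ, where q_β = (σ, h_β, ℛ ∪ 𝒮_β), the finite sets 𝒮_β ⊆ 𝒳 are pairwise disjoint and disjoint from the finite set ℛ ⊆ 𝒳. Let h' : T^{↑<ω} → ω be such that (σ, h', ℛ) ∈ Q_T(𝒳) and h_β ≥ h' pointwise for every β ∈ I. Then there is h : T^{↑<ω} → ω with h ≥ h' pointwise such that q = (σ, h, ℛ) ∈ Q_T(𝒳) and, for every τ ∈ T^{↑<ω} to which q is extensible, the set {β ∈ I : q_β is extensible to τ} is uncountable. -/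
open Cardinal

/-- `p` is extensible to `τ`: `σ_p` is an initial segment of `τ` and for every
`|σ_p| ≤ i < |τ|`, `h_p(τ↾i) ≤ ht(τ(i))` and `τ(i) ∉ ⋃𝒳_p`. -/
def Extensible {T : Type*} [PartialOrder T]
    (p : List T × (List T → ℕ) × Set (Set T)) (τ : List T) : Prop :=
  p.1 <+: τ ∧ ∀ i : Fin τ.length, p.1.length ≤ i.val →
    p.2.1 (τ.take i.val) ≤ treeHt (τ.get i) ∧ τ.get i ∉ ⋃₀ p.2.2

/-- Core combinatorial lemma: given an uncountable `J`, pairwise disjoint finite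
subfamilies `𝒮 β` of an almost disjoint family, and a function `g : ι → ℕ`, there
is a height threshold `n` such that every node of height at least `n` keeps
uncountably many `β ∈ J` with `g β ≤ treeHt t` and `t ∉ ⋃₀ 𝒮 β`. -/
theorem stmt6_core {T : Type*} [PartialOrder T] {𝒳 : Set (Set T)}
    (hAD : ∀ A ∈ 𝒳, ∀ B ∈ 𝒳, A ≠ B → (A ∩ B).Finite)
    {ι : Type*} {J : Set ι} (hJ : ¬ J.Countable) (𝒮 : ι → Set (Set T))
    (hSsub : ∀ β ∈ J, 𝒮 β ⊆ 𝒳) (hSfin : ∀ β ∈ J, (𝒮 β).Finite)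
    (hSdisj : ∀ β ∈ J, ∀ γ ∈ J, β ≠ γ → Disjoint (𝒮 β) (𝒮 γ))
    (g : ι → ℕ) :
    ∃ n : ℕ, ∀ t : T, n ≤ treeHt t →
      ¬ {β ∈ J | g β ≤ treeHt t ∧ t ∉ ⋃₀ 𝒮 β}.Countable := by
  by_contra hcon
  push_neg at hcon
  choose t ht hC using hcon
  -- find m with uncountably many β ∈ J with g β ≤ m
  obtain ⟨m, hm⟩ : ∃ m : ℕ, ¬ {β ∈ J | g β ≤ m}.Countable := by
    by_contra hall
    push_neg at hall
    apply hJ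
    have hsub : J ⊆ ⋃ m : ℕ, {β ∈ J | g β ≤ m} :=
      fun β hβ => Set.mem_iUnion.2 ⟨g β, hβ, le_refl _⟩
    exact (Set.countable_iUnion hall).mono hsub
  set D : Set ι :=
    {β ∈ J | g β ≤ m} \ ⋃ k : ℕ,
      {β ∈ J | g β ≤ treeHt (t (m + k)) ∧ t (m + k) ∉ ⋃₀ 𝒮 β} with hDdef
  have hD : ¬ D.Countable := by
    intro hc
    apply hm
    have hU : ({β ∈ J | g β ≤ m} : Set ι) ⊆
        D ∪ ⋃ k : ℕ, {β ∈ J | g β ≤ treeHt (t (m + k)) ∧ t (m + k) ∉ ⋃₀ 𝒮 β} := by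
      intro β hβ
      by_cases hb : β ∈ ⋃ k : ℕ,
          {β ∈ J | g β ≤ treeHt (t (m + k)) ∧ t (m + k) ∉ ⋃₀ 𝒮 β}
      · exact Or.inr hb
      · exact Or.inl ⟨hβ, hb⟩
    exact ((hc.union (Set.countable_iUnion fun k => hC (m + k))).mono hU)
  have hmem : ∀ δ ∈ D, ∀ k : ℕ, t (m + k) ∈ ⋃₀ 𝒮 δ := by
    rintro δ ⟨⟨hδJ, hδg⟩, hδU⟩ k
    by_contra hnot
    exact hδU (Set.mem_iUnion.2 ⟨k, hδJ,
      le_trans hδg (le_trans (Nat.le_add_right m k) (ht (m + k))), hnot⟩)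
  have hDJ : ∀ δ ∈ D, δ ∈ J := fun δ hδ => hδ.1.1
  obtain ⟨β, hβD, γ, hγD, hne⟩ : D.Nontrivial := by
    by_contra hsub
    rw [Set.not_nontrivial_iff] at hsub
    exact hD hsub.countable
  -- pigeonhole: some member of the finite family 𝒮 δ contains infinitely many t's
  have pig : ∀ (K : Set ℕ), K.Infinite → ∀ δ ∈ D,
      ∃ A ∈ 𝒮 δ, {k ∈ K | t (m + k) ∈ A}.Infinite := by
    intro K hK δ hδ
    by_contra hno
    push_neg at hno
    apply hK
    have hsub : K ⊆ ⋃ A ∈ 𝒮 δ, {k ∈ K | t (m + k) ∈ A} := by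
      intro k hk
      obtain ⟨A, hA, htA⟩ := hmem δ hδ k
      exact Set.mem_biUnion hA ⟨hk, htA⟩
    exact (Set.Finite.biUnion (hSfin δ (hDJ δ hδ))
      (fun A hA => hno A hA)).subset hsub
  obtain ⟨A, hA, hKA⟩ := pig Set.univ Set.infinite_univ β hβD
  obtain ⟨B, hB, hKB⟩ := pig {k ∈ Set.univ | t (m + k) ∈ A} hKA γ hγD
  have hABne : A ≠ B := by
    intro hEq
    exact Set.disjoint_left.mp (hSdisj β (hDJ β hβD) γ (hDJ γ hγD) hne) hA (hEq ▸ hB)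
  have hfin : (A ∩ B).Finite :=
    hAD A (hSsub β (hDJ β hβD) hA) B (hSsub γ (hDJ γ hγD) hB) hABne
  -- the image of the infinite index set is an infinite subset of A ∩ B
  have himg : ((fun k => t (m + k)) ''
      {k ∈ {k ∈ Set.univ | t (m + k) ∈ A} | t (m + k) ∈ B}).Infinite := by
    rw [← Set.not_infinite] at hfin
    by_contra hfin'
    rw [Set.not_infinite] at hfin'
    obtain ⟨N, hN⟩ := (hfin'.image treeHt).bddAbove
    obtain ⟨k, hk, hkN⟩ := hKB.exists_gt N
    have h1 : treeHt (t (m + k)) ≤ N :=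
      hN (Set.mem_image_of_mem _ (Set.mem_image_of_mem _ hk))
    have h2 : m + k ≤ treeHt (t (m + k)) := ht (m + k)
    omega
  apply himg.mono ?_ hfin
  rintro x ⟨k, ⟨⟨_, hkA⟩, hkB⟩, rfl⟩
  exact ⟨hkA, hkB⟩

/-- The preparation lemma: given an uncountable family of conditions
`q_β = (σ, h_β, ℛ ∪ 𝒮_β)` with the same stem, pairwise disjoint `𝒮_β` disjoint from `ℛ`,
and `h' ≤ h_β` with `(σ, h', ℛ)` a condition, there is `h ≥ h'` such that `q = (σ, h, ℛ)`
is a condition and every `τ` to which `q` is extensible has uncountably many `β` with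
`q_β` extensible to `τ`. -/
theorem stmt6 {T : Type*} [PartialOrder T] (hT : IsOmegaTree T)
    (𝒳 : Set (Set T)) (h𝒳 : IsADSubtreeFamily 𝒳)
    {ι : Type*} (I : Set ι) (hI : ¬ I.Countable)
    (σ : List T) (hβ : ι → List T → ℕ) (ℛ : Set (Set T)) (𝒮 : ι → Set (Set T))
    (hRsub : ℛ ⊆ 𝒳) (hRfin : ℛ.Finite)
    (hSsub : ∀ β ∈ I, 𝒮 β ⊆ 𝒳) (hSfin : ∀ β ∈ I, (𝒮 β).Finite)
    (hSdisj : ∀ β ∈ I, ∀ γ ∈ I, β ≠ γ → Disjoint (𝒮 β) (𝒮 γ))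
    (hSR : ∀ β ∈ I, Disjoint (𝒮 β) ℛ)
    (hq : ∀ β ∈ I, ((σ, hβ β, ℛ ∪ 𝒮 β) : List T × (List T → ℕ) × Set (Set T)) ∈ QSet 𝒳)
    (h' : List T → ℕ)
    (hh' : ((σ, h', ℛ) : List T × (List T → ℕ) × Set (Set T)) ∈ QSet 𝒳)
    (hge : ∀ β ∈ I, ∀ τ : List T, h' τ ≤ hβ β τ) :
    ∃ h : List T → ℕ, (∀ τ : List T, h' τ ≤ h τ) ∧
      ((σ, h, ℛ) : List T × (List T → ℕ) × Set (Set T)) ∈ QSet 𝒳 ∧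
      ∀ τ : List T, UpSeq τ → Extensible (σ, h, ℛ) τ →
        ¬ {β ∈ I | Extensible (σ, hβ β, ℛ ∪ 𝒮 β) τ}.Countable := by
  classical
  set E : List T → Set ι := fun τ => {β ∈ I | Extensible (σ, hβ β, ℛ ∪ 𝒮 β) τ} with hEdef
  have hEsubI : ∀ τ, E τ ⊆ I := fun τ β hb => hb.1
  have core' : ∀ τ : List T, ∃ n : ℕ, ¬ (E τ).Countable →
      ∀ s : T, n ≤ treeHt s →
        ¬ {β ∈ E τ | hβ β τ ≤ treeHt s ∧ s ∉ ⋃₀ 𝒮 β}.Countable := by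
    intro τ
    by_cases hc : (E τ).Countable
    · exact ⟨0, fun hn => absurd hc hn⟩
    · obtain ⟨n, hn⟩ := stmt6_core h𝒳.2 hc 𝒮
        (fun β hb => hSsub β (hEsubI τ hb))
        (fun β hb => hSfin β (hEsubI τ hb))
        (fun β hb γ hg => hSdisj β (hEsubI τ hb) γ (hEsubI τ hg))
        (fun β => hβ β τ)
      exact ⟨n, fun _ => hn⟩
  choose n hn using core'
  set f : List T → ℕ := fun τ => if σ <+: τ then max (h' τ) (n τ) else h' τ with hf
  have hfpos : ∀ τ : List T, σ <+: τ → f τ = max (h' τ) (n τ) := by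
    intro τ hp
    rw [hf]
    exact if_pos hp
  have hfneg : ∀ τ : List T, ¬ (σ <+: τ) → f τ = h' τ := by
    intro τ hp
    rw [hf]
    exact if_neg hp
  have hfge : ∀ τ : List T, h' τ ≤ f τ := by
    intro τ
    by_cases hp : σ <+: τ
    · rw [hfpos τ hp]; exact le_max_left _ _
    · rw [hfneg τ hp]
  refine ⟨f, hfge, ?_, ?_⟩
  · refine ⟨hh'.1, hh'.2.1, hh'.2.2.1, fun i => ?_⟩
    have hnp : ¬ (σ <+: σ.take i.val) := by
      intro hp
      have h1 := hp.length_le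
      rw [List.length_take] at h1
      have h2 : i.val < σ.length := i.isLt
      omega
    show f (σ.take i.val) ≤ treeHt (σ.get i)
    rw [hfneg _ hnp]
    exact hh'.2.2.2 i
  · -- main induction on the length of τ
    have main : ∀ N : ℕ, ∀ τ : List T, τ.length = N → UpSeq τ →
        Extensible (σ, f, ℛ) τ → ¬ (E τ).Countable := by
      intro N
      induction N using Nat.strong_induction_on with
      | _ N IH =>
        intro τ hlen hup hext
        have hpre : σ <+: τ := hext.1
        have hcond := hext.2
        by_cases hle : τ.length ≤ σ.length
        · -- case τ = σ
          have heq : σ = τ := hpre.eq_of_length (le_antisymm hpre.length_le hle)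
          subst heq
          intro hc
          apply hI
          refine hc.mono (show I ⊆ E σ from fun β hb => ?_)
          exact ⟨hb, List.prefix_refl _, fun i hi => absurd i.isLt (not_lt.2 hi)⟩
        · push_neg at hle
          have hn1 : τ.length - 1 < τ.length := by omega
          have hσtake : τ.take σ.length = σ := (List.prefix_iff_eq_take.mp hpre).symm
          have hlen' : (τ.take (τ.length - 1)).length = τ.length - 1 := by
            rw [List.length_take, Nat.min_eq_left (le_of_lt hn1)]
          have hpre' : σ <+: τ.take (τ.length - 1) := by
            have h1 : (τ.take (τ.length - 1)).take σ.length = σ := by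
              rw [List.take_take, Nat.min_eq_left (by omega), hσtake]
            exact h1 ▸ List.take_prefix _ _
          have hup' : UpSeq (τ.take (τ.length - 1)) :=
            List.Pairwise.sublist (List.take_sublist _ _) hup
          have htake : ∀ i : ℕ, i ≤ τ.length - 1 →
              (τ.take (τ.length - 1)).take i = τ.take i := by
            intro i hi
            rw [List.take_take, Nat.min_eq_left hi]
          have hget : ∀ (i : ℕ) (hi : i < (τ.take (τ.length - 1)).length)
              (hi2 : i < τ.length),
              (τ.take (τ.length - 1)).get ⟨i, hi⟩ = τ.get ⟨i, hi2⟩ := by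
            intro i hi hi2
            simp [List.getElem_take]
          have hext' : Extensible (σ, f, ℛ) (τ.take (τ.length - 1)) := by
            refine ⟨hpre', fun i hi => ?_⟩
            have hi2 : i.val < τ.length := by
              have := i.isLt
              omega
            have h3 := hcond ⟨i.val, hi2⟩ hi
            show f ((τ.take (τ.length - 1)).take i.val) ≤
                treeHt ((τ.take (τ.length - 1)).get i) ∧
                (τ.take (τ.length - 1)).get i ∉ ⋃₀ ℛ
            rw [htake i.val (by have := i.isLt; omega),
              hget i.val i.isLt hi2]
            exact h3
          have huncE' : ¬ (E (τ.take (τ.length - 1))).Countable :=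
            IH (τ.length - 1) (by omega) _ hlen' hup' hext'
          -- the last node of τ has height at least n (τ.take (τ.length - 1))
          have hlast := hcond ⟨τ.length - 1, hn1⟩ (by show σ.length ≤ τ.length - 1; omega)
          have hhle : f (τ.take (τ.length - 1)) ≤ treeHt (τ.get ⟨τ.length - 1, hn1⟩) :=
            hlast.1
          have hsR : τ.get ⟨τ.length - 1, hn1⟩ ∉ ⋃₀ ℛ := hlast.2
          rw [hfpos _ hpre'] at hhle
          have hns : n (τ.take (τ.length - 1)) ≤ treeHt (τ.get ⟨τ.length - 1, hn1⟩) :=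
            le_trans (le_max_right _ _) hhle
          have hSunc := hn (τ.take (τ.length - 1)) huncE' (τ.get ⟨τ.length - 1, hn1⟩) hns
          intro hc
          apply hSunc
          refine hc.mono ?_
          rintro β ⟨⟨hβI, hβext⟩, hβh, hβs⟩
          have hβpre : σ <+: τ.take (τ.length - 1) := hβext.1
          have hβcond := hβext.2
          refine ⟨hβI, hpre, fun i hi => ?_⟩
          by_cases hi' : i.val < τ.length - 1
          · have h3 := hβcond ⟨i.val, by rw [hlen']; exact hi'⟩ hi
            rw [htake i.val (le_of_lt hi'), hget i.val (by rw [hlen']; exact hi') i.isLt] at h3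
            have hieq : τ.get i = τ.get ⟨i.val, i.isLt⟩ := rfl
            rw [hieq]
            exact h3
          · have hieq : i.val = τ.length - 1 := by
              have := i.isLt
              omega
            rw [show i = (⟨τ.length - 1, hn1⟩ : Fin τ.length) from Fin.ext hieq]
            refine ⟨hβh, ?_⟩
            show τ.get ⟨τ.length - 1, hn1⟩ ∉ ⋃₀ (ℛ ∪ 𝒮 β)
            rw [Set.sUnion_union]
            rintro (hs | hs)
            · exact hsR hs
            · exact hβs hs
    intro τ hup hext
    exact main τ.length τ rfl hup hext
end

section
/- Let T be a set, let J be an uncountable index set, and let (U_β : β ∈ J) be a family of subsets of T such that U_β ∩ U_γ is finite whenever β ≠ γ. Then the set E = {t ∈ T : {β ∈ J : t ∉ U_β} is countable} is finite. -/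
/-- If `(U_β : β ∈ J)` is an uncountably indexed family of subsets of `T` with pairwise
finite intersections, then the set of `t ∈ T` lying in all but countably many `U_β` is
finite. -/
theorem stmt7 {T ι : Type*} (J : Set ι) (hJ : ¬ J.Countable)
    (U : ι → Set T)
    (hU : ∀ β ∈ J, ∀ γ ∈ J, β ≠ γ → (U β ∩ U γ).Finite) :
    {t : T | {β ∈ J | t ∉ U β}.Countable}.Finite := by
  by_contra hfin
  rw [← Set.not_infinite, not_not] at hfin
  let f : ℕ ↪ _ := hfin.natEmbedding _
  -- the union of exceptional sets is countable
  set C : Set ι := ⋃ n : ℕ, {β ∈ J | (f n : T) ∉ U β} with hC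
  have hCcnt : C.Countable := by
    apply Set.countable_iUnion
    intro n
    exact (f n).2
  have hJC : (J \ C).Infinite := by
    intro hfin'
    apply hJ
    have : J ⊆ (J \ C) ∪ C := fun x hx => by
      by_cases h : x ∈ C
      · exact Or.inr h
      · exact Or.inl ⟨hx, h⟩
    exact (hfin'.countable.union hCcnt).mono this
  obtain ⟨β, hβ⟩ := hJC.nonempty
  obtain ⟨γ, hγ, hne⟩ := (hJC.diff (Set.finite_singleton β)).nonempty
  have hne' : γ ≠ β := fun h => hne h
  have hmem : ∀ δ, δ ∈ J \ C → ∀ n : ℕ, (f n : T) ∈ U δ := by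
    intro δ hδ n
    by_contra h
    exact hδ.2 (Set.mem_iUnion.mpr ⟨n, hδ.1, h⟩)
  have hsub : Set.range (fun n => (f n : T)) ⊆ U β ∩ U γ := by
    rintro x ⟨n, rfl⟩
    exact ⟨hmem β hβ n, hmem γ hγ n⟩
  have hinj : Function.Injective (fun n => (f n : T)) := fun a b h =>
    f.injective (Subtype.ext h)
  exact Set.infinite_range_of_injective hinj
    ((hU β hβ.1 γ hγ.1 (Ne.symm hne')).subset hsub)
end

section
/- Let T be an ω-tree, let 𝒳 be an almost disjoint family of subtrees of T, let ℛ be a finite subset of 𝒳, let B ⊆ T^{↑<ω}, and let W and ρ be the associated rank hierarchy (computed from ℛ and B). Let (𝒮_β : β ∈ I) be a family of pairwise disjoint finite subfamilies of 𝒳. Then for every η ∈ T^{↑<ω} with 0 < ρ(η) < ω₁, for all but at most one β ∈ I, the set {t ∈ T \ ⋃(ℛ ∪ 𝒮_β) : η⌢⟨t⟩ ∈ T^{↑<ω} and ρ(η⌢⟨t⟩) < ρ(η)} is infinite. -/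
open Cardinal

/-- `Succ_ℛ(η)`: one-step extensions of `η` by a node outside `⋃ℛ` which stay in `T^{↑<ω}`. -/
def SuccR {T : Type*} [PartialOrder T] (ℛ : Set (Set T)) (η : List T) : Set (List T) :=
  {τ | ∃ t : T, t ∉ ⋃₀ ℛ ∧ UpSeq (η ++ [t]) ∧ τ = η ++ [t]}

open Classical in
/-- The rank hierarchy: `W_0 = B`, and for `α > 0`,
`W_α = ⋃_{ξ<α} W_ξ ∪ {η ∈ T^{↑<ω} : Succ_ℛ(η) ∩ ⋃_{ξ<α} W_ξ is infinite}`. -/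
noncomputable def Wfun {T : Type*} [PartialOrder T] (ℛ : Set (Set T)) (B : Set (List T)) :
    Ordinal.{0} → Set (List T) :=
  WellFounded.fix Ordinal.lt_wf fun α rec =>
    if α = 0 then B
    else (⋃ ξ : Set.Iio α, rec ξ.1 ξ.2) ∪
      {η | UpSeq η ∧ (SuccR ℛ η ∩ ⋃ ξ : Set.Iio α, rec ξ.1 ξ.2).Infinite}

/-- `W = ⋃_{α<ω₁} W_α`. -/
noncomputable def WSet {T : Type*} [PartialOrder T] (ℛ : Set (Set T)) (B : Set (List T)) :
    Set (List T) :=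
  ⋃ α ∈ Set.Iio (Cardinal.aleph 1).ord, Wfun ℛ B α

/-- `ρ(η) = min {α < ω₁ : η ∈ W_α}` (with value `0 = sInf ∅` when `η ∉ W`). -/
noncomputable def rankρ {T : Type*} [PartialOrder T] (ℛ : Set (Set T)) (B : Set (List T))
    (η : List T) : Ordinal :=
  sInf {α : Ordinal | α < (Cardinal.aleph 1).ord ∧ η ∈ Wfun ℛ B α}


open Classical in
lemma Wfun_eq {T : Type*} [PartialOrder T] (ℛ : Set (Set T)) (B : Set (List T))
    (α : Ordinal.{0}) :
    Wfun ℛ B α = if α = 0 then B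
    else (⋃ ξ : Set.Iio α, Wfun ℛ B ξ.1) ∪
      {η | UpSeq η ∧ (SuccR ℛ η ∩ ⋃ ξ : Set.Iio α, Wfun ℛ B ξ.1).Infinite} := by
  rw [Wfun, WellFounded.fix_eq]

/-- If `(𝒮_β : β ∈ I)` are pairwise disjoint finite subfamilies of `𝒳` and
`0 < ρ(η) < ω₁`, then for all but at most one `β ∈ I` the set of nodes `t` outside
`⋃(ℛ ∪ 𝒮_β)` giving a rank-lowering one-step extension of `η` is infinite. -/
theorem stmt10 {T : Type*} [PartialOrder T] (hT : IsOmegaTree T)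
    (𝒳 : Set (Set T)) (h𝒳 : IsADSubtreeFamily 𝒳)
    (ℛ : Set (Set T)) (hRsub : ℛ ⊆ 𝒳) (hRfin : ℛ.Finite)
    (B : Set (List T)) (hB : ∀ σ ∈ B, UpSeq σ)
    {ι : Type*} (I : Set ι) (𝒮 : ι → Set (Set T))
    (hSsub : ∀ β ∈ I, 𝒮 β ⊆ 𝒳) (hSfin : ∀ β ∈ I, (𝒮 β).Finite)
    (hSdisj : ∀ β ∈ I, ∀ γ ∈ I, β ≠ γ → Disjoint (𝒮 β) (𝒮 γ))
    (η : List T) (hη : UpSeq η)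
    (hpos : 0 < rankρ ℛ B η) (hlt : rankρ ℛ B η < (Cardinal.aleph 1).ord) :
    Set.Subsingleton {β ∈ I | ¬ {t : T | t ∉ ⋃₀ (ℛ ∪ 𝒮 β) ∧ UpSeq (η ++ [t]) ∧
      (η ++ [t]) ∈ WSet ℛ B ∧ rankρ ℛ B (η ++ [t]) < rankρ ℛ B η}.Infinite} := by

  intro β hβ γ hγ
  by_contra hne
  obtain ⟨hβI, hβbad⟩ := hβ
  obtain ⟨hγI, hγbad⟩ := hγ
  set α := rankρ ℛ B η with hα
  -- the defining set of the rank is nonempty and α belongs to it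
  have hne' : {a : Ordinal | a < (Cardinal.aleph 1).ord ∧ η ∈ Wfun ℛ B a}.Nonempty := by
    by_contra h
    rw [Set.not_nonempty_iff_eq_empty] at h
    have : rankρ ℛ B η = 0 := by rw [rankρ, h]; simp
    exact hpos.ne' (hα.trans this)
  have hmem : α ∈ {a : Ordinal | a < (Cardinal.aleph 1).ord ∧ η ∈ Wfun ℛ B a} :=
    csInf_mem hne'
  have hαpos : α ≠ 0 := hpos.ne'

  have hW : η ∈ Wfun ℛ B α := hmem.2
  rw [Wfun_eq, if_neg hαpos] at hW
  -- η cannot be in an earlier level, by minimality of α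
  have hnot : η ∉ ⋃ ξ : Set.Iio α, Wfun ℛ B ξ.1 := by
    intro h
    obtain ⟨s, ⟨⟨ξ, hξα⟩, rfl⟩, hmem'⟩ := h
    have : α ≤ ξ := csInf_le' ⟨lt_trans hξα hmem.1, hmem'⟩
    exact absurd hξα (not_lt.mpr this)
  have hinf : (SuccR ℛ η ∩ ⋃ ξ : Set.Iio α, Wfun ℛ B ξ.1).Infinite := by
    rcases hW with h | h
    · exact absurd h hnot
    · exact h.2
  -- the underlying set of nodes
  set S : Set T := {t : T | t ∉ ⋃₀ ℛ ∧ UpSeq (η ++ [t]) ∧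
      (η ++ [t]) ∈ ⋃ ξ : Set.Iio α, Wfun ℛ B ξ.1} with hS
  have himg : SuccR ℛ η ∩ (⋃ ξ : Set.Iio α, Wfun ℛ B ξ.1) = (fun t => η ++ [t]) '' S := by
    ext τ
    constructor
    · rintro ⟨⟨t, ht1, ht2, rfl⟩, hτ⟩
      exact ⟨t, ⟨ht1, ht2, hτ⟩, rfl⟩
    · rintro ⟨t, ⟨ht1, ht2, ht3⟩, rfl⟩
      exact ⟨⟨t, ht1, ht2, rfl⟩, ht3⟩
  have hSinf : S.Infinite := by
    rw [himg] at hinf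
    exact Set.Infinite.of_image _ hinf
  -- facts about elements of S
  have hSrank : ∀ t ∈ S, (η ++ [t]) ∈ WSet ℛ B ∧ rankρ ℛ B (η ++ [t]) < α := by
    rintro t ⟨ht1, ht2, ht3⟩
    obtain ⟨s, ⟨⟨ξ, hξα⟩, rfl⟩, hmem'⟩ := ht3
    have hξω : (ξ : Ordinal) < (Cardinal.aleph 1).ord := lt_trans hξα hmem.1
    constructor
    · exact Set.mem_biUnion hξω hmem'
    · exact lt_of_le_of_lt (csInf_le' ⟨hξω, hmem'⟩) hξα
  -- S minus ⋃𝒮β is contained in the target set for β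
  have hkey : ∀ δ, δ ∈ I → ¬ {t : T | t ∉ ⋃₀ (ℛ ∪ 𝒮 δ) ∧ UpSeq (η ++ [t]) ∧
      (η ++ [t]) ∈ WSet ℛ B ∧ rankρ ℛ B (η ++ [t]) < rankρ ℛ B η}.Infinite →
      (S \ ⋃₀ (𝒮 δ)).Finite := by
    intro δ _ hbad
    rw [Set.not_infinite] at hbad
    refine hbad.subset ?_
    rintro t ⟨⟨ht1, ht2, ht3⟩, ht4⟩
    obtain ⟨hw, hr⟩ := hSrank t ⟨ht1, ht2, ht3⟩
    refine ⟨?_, ht2, hw, hr⟩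
    rw [Set.sUnion_union]
    rintro (h | h)
    · exact ht1 h
    · exact ht4 h
  -- the intersection ⋃𝒮β ∩ ⋃𝒮γ is finite by almost disjointness
  have hint : (⋃₀ (𝒮 β) ∩ ⋃₀ (𝒮 γ)).Finite := by
    have : ⋃₀ (𝒮 β) ∩ ⋃₀ (𝒮 γ) = ⋃ A ∈ 𝒮 β, ⋃ C ∈ 𝒮 γ, A ∩ C := by
      ext x
      simp only [Set.mem_inter_iff, Set.mem_sUnion, Set.mem_iUnion]
      constructor
      · rintro ⟨⟨A, hA, hxA⟩, ⟨C, hC, hxC⟩⟩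
        exact ⟨A, hA, C, hC, hxA, hxC⟩
      · rintro ⟨A, hA, C, hC, hxA, hxC⟩
        exact ⟨⟨A, hA, hxA⟩, ⟨C, hC, hxC⟩⟩
    rw [this]
    refine (hSfin β hβI).biUnion fun A hA => (hSfin γ hγI).biUnion fun C hC => ?_
    refine h𝒳.2 A (hSsub β hβI hA) C (hSsub γ hγI hC) ?_
    intro h
    exact (hSdisj β hβI γ hγI hne).ne_of_mem hA hC (by rw [h])
  -- conclude S is finite, contradiction
  have : S.Finite := by
    have hsub : S ⊆ (S \ ⋃₀ (𝒮 β)) ∪ (S \ ⋃₀ (𝒮 γ)) ∪ (⋃₀ (𝒮 β) ∩ ⋃₀ (𝒮 γ)) := by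
      intro t ht
      by_cases h1 : t ∈ ⋃₀ (𝒮 β)
      · by_cases h2 : t ∈ ⋃₀ (𝒮 γ)
        · exact Or.inr ⟨h1, h2⟩
        · exact Or.inl (Or.inr ⟨ht, h2⟩)
      · exact Or.inl (Or.inl ⟨ht, h1⟩)
    exact (((hkey β hβI hβbad).union (hkey γ hγI hγbad)).union hint).subset hsub
  exact hSinf this
end

section
/- Let T be an ω-tree, let (C_α : α < ω₁) be a family of subsets of ω, and let (P_ℓ : ℓ < ω) be a sequence of subsets of T. For u ∈ T and i < ω put D^u_i = {ℓ < ω : there exists t ∈ P_ℓ with u ⪯ t and ht(t) ≥ i}. Let u ∈ T and suppose that for every immediate successor v of u in T there exists i_v < ω such that D^v_{i_v} is not 𝒞-large. Then there exists i < ω such that D^u_i is not 𝒞-large. -/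
open Cardinal

/-- Given a family `(C_α : α < ω₁)` of subsets of `ω`, `E ⊆ ω` is `𝒞`-large if
`{α < ω₁ : E ∩ C_α is infinite}` is uncountable. -/
def CLarge (C : Ordinal.{0} → Set ℕ) (E : Set ℕ) : Prop :=
  ¬ {α : Ordinal | α < (Cardinal.aleph 1).ord ∧ (E ∩ C α).Infinite}.Countable

lemma treeHt_eq_ncard {T : Type*} [PartialOrder T] (t : T) :
    treeHt t = {s : T | s < t}.ncard := rfl

lemma treeHt_lt_of_lt {T : Type*} [PartialOrder T]
    (hfin : ∀ t : T, {s : T | s < t}.Finite) {a b : T} (h : a < b) :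
    treeHt a < treeHt b := by
  rw [treeHt_eq_ncard, treeHt_eq_ncard]
  apply Set.ncard_lt_ncard _ (hfin b)
  constructor
  · exact fun s hs => lt_trans hs h
  · intro hba
    exact absurd (hba h) (lt_irrefl a)

lemma exists_mid {T : Type*} [PartialOrder T]
    (hfin : ∀ t : T, {s : T | s < t}.Finite)
    (hchain : ∀ t : T, IsChain (· ≤ ·) {s : T | s < t})
    {u t : T} (h : u < t) :
    ∃ v : T, u < v ∧ v ≤ t ∧ treeHt v = treeHt u + 1 := by
  classical
  set S : Set T := {s | s ≤ t} with hS
  have hSeq : S = insert t {s : T | s < t} := by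
    ext s; simp [hS, le_iff_lt_or_eq, or_comm]
  have hSfin : S.Finite := by rw [hSeq]; exact (hfin t).insert t
  have hchainS : IsChain (· ≤ ·) S := by
    intro a ha b hb hab
    rcases eq_or_lt_of_le (ha : a ≤ t) with rfl | ha'
    · exact Or.inr (le_of_lt (lt_of_le_of_ne hb hab.symm))
    rcases eq_or_lt_of_le (hb : b ≤ t) with rfl | hb'
    · exact Or.inl (le_of_lt ha')
    exact hchain t ha' hb' hab
  have hmono : ∀ a ∈ S, ∀ b ∈ S, a < b → treeHt a < treeHt b :=
    fun a _ b _ hab => treeHt_lt_of_lt hfin hab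
  have hinj : Set.InjOn treeHt S := by
    intro a ha b hb hab
    rcases eq_or_ne a b with rfl | hne
    · rfl
    rcases hchainS ha hb hne with h1 | h1
    · exact absurd hab (Nat.ne_of_lt (hmono a ha b hb (lt_of_le_of_ne h1 hne)))
    · exact absurd hab.symm (Nat.ne_of_lt (hmono b hb a ha (lt_of_le_of_ne h1 hne.symm)))
  have hcardS : S.ncard = treeHt t + 1 := by
    rw [hSeq, Set.ncard_insert_of_notMem (by simp) (hfin t), treeHt_eq_ncard]
  have himg : treeHt '' S ⊆ Set.Iio (treeHt t + 1) := by
    rintro n ⟨s, hs, rfl⟩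
    rcases eq_or_lt_of_le (hs : s ≤ t) with rfl | hs'
    · exact Nat.lt_succ_self _
    · exact Nat.lt_succ_of_lt (treeHt_lt_of_lt hfin hs')
  have hIio : (Set.Iio (treeHt t + 1) : Set ℕ).ncard = treeHt t + 1 := by
    rw [← Finset.coe_Iio, Set.ncard_coe_finset, Nat.card_Iio]
  have heq : treeHt '' S = Set.Iio (treeHt t + 1) :=
    Set.eq_of_subset_of_ncard_le himg
      (by rw [hIio, Set.ncard_image_of_injOn hinj, hcardS]) (Set.finite_Iio _)
  have hmem : treeHt u + 1 ∈ treeHt '' S := by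
    rw [heq]
    exact Nat.succ_lt_succ (treeHt_lt_of_lt hfin h)
  obtain ⟨v, hvS, hv⟩ := hmem
  have hne : u ≠ v := by
    intro rfl'; rw [← rfl'] at hv; omega
  have huv : u ≤ v := by
    rcases hchainS (le_of_lt h : u ∈ S) hvS hne with h1 | h1
    · exact h1
    · exfalso
      have := treeHt_lt_of_lt hfin (lt_of_le_of_ne h1 hne.symm)
      omega
  exact ⟨v, lt_of_le_of_ne huv hne, hvS, hv⟩

/-- With `D^u_i = {ℓ : ∃ t ∈ P_ℓ, u ⪯ t, ht(t) ≥ i}`: if for every immediate successor `v`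
of `u` some `D^v_{i_v}` is not `𝒞`-large, then some `D^u_i` is not `𝒞`-large. -/
theorem stmt16 {T : Type*} [PartialOrder T] (hT : IsOmegaTree T)
    (C : Ordinal.{0} → Set ℕ) (P : ℕ → Set T) (u : T)
    (hsucc : ∀ v : T, u ≤ v → u ≠ v → treeHt v = treeHt u + 1 →
      ∃ i : ℕ, ¬ CLarge C {ℓ : ℕ | ∃ t ∈ P ℓ, v ≤ t ∧ i ≤ treeHt t}) :
    ∃ i : ℕ, ¬ CLarge C {ℓ : ℕ | ∃ t ∈ P ℓ, u ≤ t ∧ i ≤ treeHt t} := by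
  classical
  obtain ⟨hcnt, hroot, hfin, hchain, hlev⟩ := hT
  set V : Set T := {v | u ≤ v ∧ u ≠ v ∧ treeHt v = treeHt u + 1} with hVdef
  have hVfin : V.Finite := (hlev (treeHt u + 1)).1.subset (fun v hv => hv.2.2)
  let g : T → ℕ := fun v =>
    if h : v ∈ V then (hsucc v h.1 h.2.1 h.2.2).choose else 0
  have hg : ∀ v ∈ V, ¬ CLarge C {ℓ : ℕ | ∃ t ∈ P ℓ, v ≤ t ∧ g v ≤ treeHt t} := by
    intro v hv
    have := (hsucc v hv.1 hv.2.1 hv.2.2).choose_spec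
    simpa [g, dif_pos hv] using this
  set I : ℕ := max (treeHt u + 1) (hVfin.toFinset.sup g) with hIdef
  refine ⟨I, ?_⟩
  rw [CLarge, not_not]
  have hsub : {α : Ordinal | α < (aleph 1).ord ∧
        ({ℓ : ℕ | ∃ t ∈ P ℓ, u ≤ t ∧ I ≤ treeHt t} ∩ C α).Infinite} ⊆
      ⋃ v ∈ hVfin.toFinset,
        {α : Ordinal | α < (aleph 1).ord ∧
          ({ℓ : ℕ | ∃ t ∈ P ℓ, v ≤ t ∧ g v ≤ treeHt t} ∩ C α).Infinite} := by
    rintro α ⟨hα, hinf⟩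
    have hsubl : ({ℓ : ℕ | ∃ t ∈ P ℓ, u ≤ t ∧ I ≤ treeHt t} ∩ C α) ⊆
        ⋃ v ∈ hVfin.toFinset,
          ({ℓ : ℕ | ∃ t ∈ P ℓ, v ≤ t ∧ g v ≤ treeHt t} ∩ C α) := by
      rintro ℓ ⟨⟨t, htP, hut, hIt⟩, hcα⟩
      have huht : treeHt u < treeHt t := by
        have : treeHt u + 1 ≤ I := le_max_left _ _
        omega
      have hune : u ≠ t := fun h => by subst h; omega
      obtain ⟨v, huv, hvt, hvh⟩ := exists_mid hfin hchain (lt_of_le_of_ne hut hune)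
      have hvV : v ∈ V := ⟨le_of_lt huv, ne_of_lt huv, hvh⟩
      have hgv : g v ≤ treeHt t := by
        have h1 : g v ≤ hVfin.toFinset.sup g :=
          Finset.le_sup (hVfin.mem_toFinset.mpr hvV)
        have h2 : hVfin.toFinset.sup g ≤ I := le_max_right _ _
        have h3 : I ≤ treeHt t := hIt
        omega
      exact Set.mem_biUnion (hVfin.mem_toFinset.mpr hvV) ⟨⟨t, htP, hvt, hgv⟩, hcα⟩
    have : ∃ v ∈ hVfin.toFinset,
        ({ℓ : ℕ | ∃ t ∈ P ℓ, v ≤ t ∧ g v ≤ treeHt t} ∩ C α).Infinite := by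
      by_contra hcon
      push_neg at hcon
      exact (hinf.mono hsubl) (Set.Finite.biUnion hVfin.toFinset.finite_toSet hcon)
    obtain ⟨v, hv, hvinf⟩ := this
    exact Set.mem_biUnion hv ⟨hα, hvinf⟩
  apply Set.Countable.mono hsub
  apply Set.Countable.biUnion (hVfin.toFinset.countable_toSet)
  intro v hv
  have := hg v (hVfin.mem_toFinset.mp hv)
  rwa [CLarge, not_not] at this
end
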